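/- arXiv:2505.06925 — 5 statements merged into one kernel-verified Lean document; each statement's English description precedes it below -/
import Mathlib

section
/- Let A, X ∈ B(H,K) with A ≠ 0. Then ‖A + λX‖ ≥ ‖A‖ for all λ ∈ ℂ if and only if for every δ > 0 and every θ ∈ [0, 2π), sup { Re(e^{iθ}⟨Xφ, Aφ⟩) : φ unit vector in the range of E_{A*A}[‖A‖²−δ, ‖A‖²] } ≥ 0. -/
open ContinuousLinearMap Filter Set Real

/-- The range of the spectral projection `E_T S` of a (selfadjoint) operator `T`
for a closed set `S ⊆ ℝ`. -/
noncomputable def spectralSubspace {H : Type*} [NormedAddCommGroup H]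
    [InnerProductSpace ℂ H] [CompleteSpace H] (T : H →L[ℂ] H) (S : Set ℝ) : Set H :=
  {φ | ∀ f : ℝ → ℝ, Continuous f → (∀ x ∈ S, f x = 0) → cfc f T φ = 0}

/-!
Let `T = A* A` and `M = ‖A‖²`, so that `spec T ⊆ (-∞, M]` and `M ∈ spec T`. For the continuous
ramp `g` that vanishes below `M - δ` and equals `1` at `M`, the vector `φ₁ = g(T) φ` lies in
`H_δ(A)`, and the scalar inequality `x + δ (1 - g x)² ≤ M` on `spec T` gives
`‖A φ‖² + δ ‖φ - φ₁‖² ≤ M ‖φ‖²`. If the supremum for some `(δ, θ)` were `-ε < 0`, then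
`Re (e^{iθ} ⟪A φ, X φ⟫) ≤ -ε ‖φ‖² + O(‖φ‖ ‖φ - φ₁‖)` for every `φ`; expanding
`‖(A + t e^{iθ} X) φ‖²` and absorbing the cross term into `δ ‖φ - φ₁‖²` gives
`‖A + t e^{iθ} X‖² ≤ M - t ε` for small `t > 0`. Conversely, unit vectors of `H_δ(A)` satisfy
`‖A φ‖² ≥ M - δ`, and `H_δ(A) ≠ 0` because `M ∈ spec T`, so unit vectors nearly attaining a
nonnegative supremum give `‖A + λ X‖² ≥ M - O(δ)`.
-/

open scoped InnerProductSpace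

lemma opNorm_le_sqrt_of_forall_norm_sq_le {𝕜 E F : Type*} [NontriviallyNormedField 𝕜]
    [SeminormedAddCommGroup E] [NormedSpace 𝕜 E] [SeminormedAddCommGroup F] [NormedSpace 𝕜 F]
    (B : E →L[𝕜] F) {c : ℝ} (h : ∀ x, ‖B x‖ ^ 2 ≤ c * ‖x‖ ^ 2) : ‖B‖ ≤ √c :=
  opNorm_le_bound _ (Real.sqrt_nonneg _) fun x =>
    calc ‖B x‖ = √(‖B x‖ ^ 2) := (Real.sqrt_sq (norm_nonneg _)).symm
      _ ≤ √(c * ‖x‖ ^ 2) := Real.sqrt_le_sqrt (h x)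
      _ = √c * ‖x‖ := by rw [Real.sqrt_mul' _ (sq_nonneg _), Real.sqrt_sq (norm_nonneg _)]

lemma exists_mem_Ico_eq_norm_mul_exp (z : ℂ) :
    ∃ θ ∈ Ico 0 (2 * π), z = ‖z‖ * Complex.exp (θ * Complex.I) := by
  refine ⟨toIcoMod two_pi_pos 0 z.arg, by simpa using toIcoMod_mem_Ico two_pi_pos 0 z.arg, ?_⟩
  conv_lhs => rw [← Complex.norm_mul_exp_arg_mul_I z]
  rw [toIcoMod]
  push_cast
  exact congrArg _ (Complex.exp_mul_I_periodic.sub_zsmul_eq _).symm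

lemma re_mul_le_norm_of_norm_eq_one {ω : ℂ} (hω : ‖ω‖ = 1) (z : ℂ) : (ω * z).re ≤ ‖z‖ :=
  (Complex.re_le_norm _).trans_eq (by rw [norm_mul, hω, one_mul])

noncomputable def cutoff (M δ x : ℝ) : ℝ := max 0 ((x - (M - δ)) / δ)

section Cutoff

variable {M δ x : ℝ}

lemma continuous_cutoff (M δ : ℝ) : Continuous (cutoff M δ) := by
  unfold cutoff
  fun_prop

lemma cutoff_of_le (hδ : 0 ≤ δ) (hx : x ≤ M - δ) : cutoff M δ x = 0 :=
  max_eq_left (div_nonpos_of_nonpos_of_nonneg (by linarith) hδ)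

lemma cutoff_self (hδ : δ ≠ 0) : cutoff M δ M = 1 := by
  simp [cutoff, hδ]

lemma abs_cutoff_le_one (hδ : 0 < δ) (hx : x ≤ M) : |cutoff M δ x| ≤ 1 := by
  rw [abs_of_nonneg (le_max_left _ _)]
  exact max_le zero_le_one ((div_le_one hδ).2 (by linarith))

lemma add_mul_one_sub_cutoff_sq_le (hδ : 0 < δ) (hx : x ≤ M) :
    x + δ * ((1 - cutoff M δ x) * (1 - cutoff M δ x)) ≤ M := by
  rcases le_or_gt x (M - δ) with hxδ | hxδ
  · rw [cutoff_of_le hδ.le hxδ]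
    linarith
  · have hu : cutoff M δ x = (x - (M - δ)) / δ := max_eq_right (by positivity)
    have hδu : δ * (1 - cutoff M δ x) = M - x := by
      rw [hu]
      field_simp
      ring
    have hu1 : 0 ≤ 1 - cutoff M δ x := by nlinarith
    nlinarith

end Cutoff

section SpectralSubspace

variable {H : Type*} [NormedAddCommGroup H] [InnerProductSpace ℂ H] [CompleteSpace H]
  {T : H →L[ℂ] H}

lemma smul_mem_spectralSubspace {S : Set ℝ} {φ : H} (c : ℂ) (hφ : φ ∈ spectralSubspace T S) :
    c • φ ∈ spectralSubspace T S := fun f hf hfS => by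
  rw [map_smul, hφ f hf hfS, smul_zero]

lemma spectralSubspace_mono {S S' : Set ℝ} (h : S ⊆ S') :
    spectralSubspace T S ⊆ spectralSubspace T S' :=
  fun _ hφ f hf hfS' => hφ f hf fun x hx => hfS' x (h hx)

lemma cfc_apply_mem_spectralSubspace {S : Set ℝ} {g : ℝ → ℝ} (hg : Continuous g)
    (hgS : ∀ x ∈ spectrum ℝ T, x ∉ S → g x = 0) (ψ : H) :
    cfc g T ψ ∈ spectralSubspace T S := by
  intro f hf hfS
  have hfg : cfc (fun x => f x * g x) T = cfc (0 : ℝ → ℝ) T := by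
    refine cfc_congr fun x hx => ?_
    by_cases hxS : x ∈ S
    · simp [hfS x hxS]
    · simp [hgS x hx hxS]
  rw [← mul_apply_eq_comp, ← cfc_mul f g T, hfg, cfc_zero, zero_apply]

lemma re_inner_cfc_le_of_le {f g : ℝ → ℝ} (hf : Continuous f) (hg : Continuous g)
    (hfg : ∀ x ∈ spectrum ℝ T, f x ≤ g x) (φ : H) :
    RCLike.re ⟪cfc f T φ, φ⟫_ℂ ≤ RCLike.re ⟪cfc g T φ, φ⟫_ℂ := by
  have := ((le_def _ _).1 (cfc_mono hfg)).re_inner_nonneg_left φ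
  rw [sub_apply, inner_sub_left, map_sub] at this
  linarith

lemma re_inner_cfc_mul_self {h : ℝ → ℝ} (hh : Continuous h) (φ : H) :
    RCLike.re ⟪cfc (fun x => h x * h x) T φ, φ⟫_ℂ = ‖cfc h T φ‖ ^ 2 := by
  rw [cfc_mul h h T, mul_apply_eq_comp, (cfc_predicate h T).isSymmetric.apply_clm,
    inner_self_eq_norm_sq]

lemma norm_cfc_apply_le {g : ℝ → ℝ} (hg : ∀ x ∈ spectrum ℝ T, |g x| ≤ 1) (φ : H) :
    ‖cfc g T φ‖ ≤ ‖φ‖ :=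
  (le_opNorm _ _).trans <| mul_le_of_le_one_left (norm_nonneg _) (norm_cfc_le zero_le_one hg)

lemma cfc_cutoff_apply_mem_spectralSubspace {M δ : ℝ} (hδ : 0 ≤ δ) (hspec : spectrum ℝ T ⊆ Iic M)
    (ψ : H) : cfc (cutoff M δ) T ψ ∈ spectralSubspace T (Icc (M - δ) M) :=
  cfc_apply_mem_spectralSubspace (continuous_cutoff M δ) (fun x hx hxS => cutoff_of_le hδ <| by
    by_contra! h
    exact hxS ⟨h.le, hspec hx⟩) ψ

variable (hT : IsSelfAdjoint T)
include hT

lemma re_inner_cfc_const (c : ℝ) (φ : H) :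
    RCLike.re ⟪cfc (fun _ => c) T φ, φ⟫_ℂ = c * ‖φ‖ ^ 2 := by
  rw [cfc_const c T, ContinuousLinearMap.algebraMap_apply, RCLike.real_smul_eq_coe_smul (K := ℂ),
    inner_smul_real_left, RCLike.smul_re, inner_self_eq_norm_sq]

lemma re_inner_cfc_add_id {f : ℝ → ℝ} (hf : Continuous f) (φ : H) :
    RCLike.re ⟪cfc (fun x => x + f x) T φ, φ⟫_ℂ =
      RCLike.re ⟪T φ, φ⟫_ℂ + RCLike.re ⟪cfc f T φ, φ⟫_ℂ := by
  rw [cfc_add T (fun x => x) f, cfc_id' ℝ T, add_apply, inner_add_left, map_add]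

lemma sub_cfc_apply {g : ℝ → ℝ} (hg : Continuous g) (φ : H) :
    φ - cfc g T φ = cfc (fun x => 1 - g x) T φ := by
  rw [cfc_sub (fun _ => 1) g T, cfc_const_one ℝ T, sub_apply, one_apply_eq_self]

lemma mul_norm_sq_le_re_inner_of_mem_spectralSubspace {c : ℝ} {φ : H}
    (hφ : φ ∈ spectralSubspace T (Ici c)) : c * ‖φ‖ ^ 2 ≤ RCLike.re ⟪T φ, φ⟫_ℂ := by
  have hf : Continuous fun x : ℝ => max (c - x) 0 := by fun_prop
  calc c * ‖φ‖ ^ 2 = RCLike.re ⟪cfc (fun _ => c) T φ, φ⟫_ℂ := (re_inner_cfc_const hT c φ).symm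
    _ ≤ RCLike.re ⟪cfc (fun x => x + max (c - x) 0) T φ, φ⟫_ℂ :=
      re_inner_cfc_le_of_le continuous_const (by fun_prop)
        (fun x _ => by linarith [le_max_left (c - x) 0]) φ
    _ = RCLike.re ⟪T φ, φ⟫_ℂ := by
      rw [re_inner_cfc_add_id hT hf, hφ _ hf fun x hx => max_eq_right (by linarith [mem_Ici.1 hx]),
        inner_zero_left, map_zero, add_zero]

lemma re_inner_add_mul_norm_sub_cfc_cutoff_sq_le {M δ : ℝ} (hδ : 0 < δ)
    (hspec : spectrum ℝ T ⊆ Iic M) (φ : H) :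
    RCLike.re ⟪T φ, φ⟫_ℂ + δ * ‖φ - cfc (cutoff M δ) T φ‖ ^ 2 ≤ M * ‖φ‖ ^ 2 := by
  have hh : Continuous fun x => 1 - cutoff M δ x := by
    have := continuous_cutoff M δ
    fun_prop
  calc RCLike.re ⟪T φ, φ⟫_ℂ + δ * ‖φ - cfc (cutoff M δ) T φ‖ ^ 2
      = RCLike.re ⟪cfc (fun x => x + δ * ((1 - cutoff M δ x) * (1 - cutoff M δ x))) T φ, φ⟫_ℂ := by
        rw [re_inner_cfc_add_id hT (by fun_prop),
          cfc_const_mul δ (fun x => (1 - cutoff M δ x) * (1 - cutoff M δ x)) T, smul_apply,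
          RCLike.real_smul_eq_coe_smul (K := ℂ), inner_smul_real_left, RCLike.smul_re,
          re_inner_cfc_mul_self hh, sub_cfc_apply hT (continuous_cutoff M δ)]
    _ ≤ RCLike.re ⟪cfc (fun _ => M) T φ, φ⟫_ℂ :=
      re_inner_cfc_le_of_le (by fun_prop) continuous_const
        (fun x hx => add_mul_one_sub_cutoff_sq_le hδ (hspec hx)) φ
    _ = M * ‖φ‖ ^ 2 := re_inner_cfc_const hT M φ

lemma exists_norm_eq_one_mem_spectralSubspace {M δ : ℝ} (hδ : 0 < δ)
    (hspec : spectrum ℝ T ⊆ Iic M) (hM : M ∈ spectrum ℝ T) :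
    ∃ φ : H, ‖φ‖ = 1 ∧ φ ∈ spectralSubspace T (Icc (M - δ) M) := by
  have hne : cfc (cutoff M δ) T ≠ 0 := by
    intro h0
    rw [← cfc_zero ℝ T] at h0
    simpa [cutoff_self hδ.ne'] using
      eqOn_of_cfc_eq_cfc h0 (continuous_cutoff M δ).continuousOn continuousOn_const hT hM
  obtain ⟨ψ, hψ⟩ : ∃ ψ, cfc (cutoff M δ) T ψ ≠ 0 := by
    by_contra! h
    exact hne (ext h)
  exact ⟨_, norm_smul_inv_norm hψ,
    smul_mem_spectralSubspace _ (cfc_cutoff_apply_mem_spectralSubspace hδ.le hspec ψ)⟩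

end SpectralSubspace

section InnerProduct

variable {E F : Type*} [NormedAddCommGroup E] [InnerProductSpace ℂ E]
  [NormedAddCommGroup F] [InnerProductSpace ℂ F] (A X : E →L[ℂ] F)

lemma norm_add_smul_apply_sq (c : ℂ) (φ : E) :
    ‖(A + c • X) φ‖ ^ 2 = ‖A φ‖ ^ 2 + 2 * (c * ⟪A φ, X φ⟫_ℂ).re + ‖c‖ ^ 2 * ‖X φ‖ ^ 2 := by
  rw [add_apply, smul_apply, norm_add_sq (𝕜 := ℂ), inner_smul_right, norm_smul, mul_pow]
  rfl

lemma norm_inner_apply_apply_le (φ ψ : E) : ‖⟪A φ, X ψ⟫_ℂ‖ ≤ ‖A‖ * ‖X‖ * (‖φ‖ * ‖ψ‖) :=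
  calc ‖⟪A φ, X ψ⟫_ℂ‖ ≤ ‖A φ‖ * ‖X ψ‖ := norm_inner_le_norm _ _
    _ ≤ ‖A‖ * ‖φ‖ * (‖X‖ * ‖ψ‖) :=
      mul_le_mul (A.le_opNorm φ) (X.le_opNorm ψ) (norm_nonneg _) (by positivity)
    _ = ‖A‖ * ‖X‖ * (‖φ‖ * ‖ψ‖) := by ring

lemma norm_inner_apply_self_sub_le (φ ψ : E) :
    ‖⟪A φ, X φ⟫_ℂ - ⟪A ψ, X ψ⟫_ℂ‖ ≤ ‖A‖ * ‖X‖ * (‖φ - ψ‖ * (‖φ‖ + ‖ψ‖)) := by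
  have hsplit : ⟪A φ, X φ⟫_ℂ - ⟪A ψ, X ψ⟫_ℂ = ⟪A (φ - ψ), X φ⟫_ℂ + ⟪A ψ, X (φ - ψ)⟫_ℂ := by
    simp only [map_sub, inner_sub_left, inner_sub_right]
    ring
  rw [hsplit]
  refine (norm_add_le _ _).trans ?_
  linarith [norm_inner_apply_apply_le A X (φ - ψ) φ, norm_inner_apply_apply_le A X ψ (φ - ψ)]

variable {A X}

lemma re_mul_inner_le_mul_norm_sq {ω : ℂ} {V : Set E} (hV : ∀ c : ℂ, ∀ ψ ∈ V, c • ψ ∈ V) {m : ℝ}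
    (h : ∀ φ ∈ V, ‖φ‖ = 1 → (ω * ⟪A φ, X φ⟫_ℂ).re ≤ m) {ψ : E} (hψ : ψ ∈ V) :
    (ω * ⟪A ψ, X ψ⟫_ℂ).re ≤ m * ‖ψ‖ ^ 2 := by
  rcases eq_or_ne ψ 0 with rfl | hψ0
  · simp
  have hscale := h ((‖ψ‖ : ℂ)⁻¹ • ψ) (hV _ ψ hψ) (norm_smul_inv_norm hψ0)
  have hpos : 0 < ‖ψ‖ ^ 2 := by positivity
  rw [map_smul, map_smul, inner_smul_left, inner_smul_right] at hscale
  have hre : ω * ((starRingEnd ℂ) (‖ψ‖ : ℂ)⁻¹ * ((‖ψ‖ : ℂ)⁻¹ * ⟪A ψ, X ψ⟫_ℂ)) =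
      (((‖ψ‖ ^ 2)⁻¹ : ℝ) : ℂ) * (ω * ⟪A ψ, X ψ⟫_ℂ) := by
    rw [map_inv₀, Complex.conj_ofReal]
    push_cast
    ring
  rw [hre, Complex.re_ofReal_mul, inv_mul_le_iff₀ hpos] at hscale
  linarith

lemma norm_le_norm_add_smul {c : ℂ}
    (h : ∀ ζ > 0, ∃ φ : E, ‖φ‖ = 1 ∧ ‖A‖ ^ 2 - ζ ≤ ‖A φ‖ ^ 2 ∧ -ζ ≤ (c * ⟪A φ, X φ⟫_ℂ).re) :
    ‖A‖ ≤ ‖A + c • X‖ := by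
  refine (pow_le_pow_iff_left₀ (norm_nonneg _) (norm_nonneg _) two_ne_zero).1
    (le_of_forall_pos_le_add fun ζ hζ => ?_)
  obtain ⟨φ, hφ1, hAφ, hre⟩ := h (ζ / 3) (by positivity)
  have hle : ‖(A + c • X) φ‖ ≤ ‖A + c • X‖ := by simpa [hφ1] using (A + c • X).le_opNorm φ
  have := norm_add_smul_apply_sq A X c φ
  nlinarith [norm_nonneg ((A + c • X) φ), sq_nonneg (‖c‖ * ‖X φ‖)]

end InnerProduct

section AdjointCompSelf

variable {H K : Type*} [NormedAddCommGroup H] [InnerProductSpace ℂ H] [CompleteSpace H]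
  [NormedAddCommGroup K] [InnerProductSpace ℂ K] [CompleteSpace K]

lemma isSelfAdjoint_adjoint_comp_self (A : H →L[ℂ] K) : IsSelfAdjoint (adjoint A ∘L A) :=
  (isPositive_adjoint_comp_self A).isSelfAdjoint

lemma spectrum_adjoint_comp_self_subset (A : H →L[ℂ] K) :
    spectrum ℝ (adjoint A ∘L A) ⊆ Iic (‖A‖ ^ 2) := by
  have h := (isSelfAdjoint_adjoint_comp_self A).le_algebraMap_norm_self
  rwa [le_algebraMap_iff_spectrum_le (isSelfAdjoint_adjoint_comp_self A), norm_adjoint_comp_self,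
    ← sq] at h

lemma sq_norm_mem_spectrum_adjoint_comp_self {A : H →L[ℂ] K} (hA : A ≠ 0) :
    ‖A‖ ^ 2 ∈ spectrum ℝ (adjoint A ∘L A) := by
  have hT : adjoint A ∘L A ≠ 0 := fun h => hA <| by
    rw [← norm_eq_zero, ← mul_self_eq_zero, ← norm_adjoint_comp_self, h, norm_zero]
  have : Nontrivial (H →L[ℂ] H) := nontrivial_of_ne _ _ hT
  rw [sq, ← norm_adjoint_comp_self]
  exact CStarAlgebra.norm_mem_spectrum_of_nonneg
    ((nonneg_iff_isPositive _).2 (isPositive_adjoint_comp_self A))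

end AdjointCompSelf

section Birkhoff

variable {H K : Type*} [NormedAddCommGroup H] [InnerProductSpace ℂ H] [CompleteSpace H]
  [NormedAddCommGroup K] [InnerProductSpace ℂ K] [CompleteSpace K]
  {A X : H →L[ℂ] K} {ω : ℂ} {δ ε : ℝ}

variable (A X) in
def reInnerOnSpectralSubspace (δ : ℝ) (ω : ℂ) : Set ℝ :=
  {r | ∃ φ : H, φ ∈ spectralSubspace (adjoint A ∘L A) (Icc (‖A‖ ^ 2 - δ) (‖A‖ ^ 2)) ∧
    ‖φ‖ = 1 ∧ r = (ω * ⟪A φ, X φ⟫_ℂ).re}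

lemma bddAbove_reInnerOnSpectralSubspace (hω : ‖ω‖ = 1) :
    BddAbove (reInnerOnSpectralSubspace A X δ ω) := by
  refine ⟨‖A‖ * ‖X‖, ?_⟩
  rintro _ ⟨φ, -, hφ1, rfl⟩
  simpa [hφ1] using (re_mul_le_norm_of_norm_eq_one hω _).trans (norm_inner_apply_apply_le A X φ φ)

lemma nonempty_reInnerOnSpectralSubspace (hA : A ≠ 0) (hδ : 0 < δ) :
    (reInnerOnSpectralSubspace A X δ ω).Nonempty := by
  obtain ⟨φ, hφ1, hφ⟩ := exists_norm_eq_one_mem_spectralSubspace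
    (isSelfAdjoint_adjoint_comp_self A) hδ (spectrum_adjoint_comp_self_subset A)
    (sq_norm_mem_spectrum_adjoint_comp_self hA)
  exact ⟨_, φ, hφ, hφ1, rfl⟩

lemma exists_norm_sq_add_le_and_re_mul_inner_le (hω : ‖ω‖ = 1) (hδ : 0 < δ) (hε : 0 ≤ ε)
    (h : ∀ ψ ∈ spectralSubspace (adjoint A ∘L A) (Icc (‖A‖ ^ 2 - δ) (‖A‖ ^ 2)),
      (ω * ⟪A ψ, X ψ⟫_ℂ).re ≤ -ε * ‖ψ‖ ^ 2) (φ : H) :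
    ∃ s, 0 ≤ s ∧ ‖A φ‖ ^ 2 + δ * s ^ 2 ≤ ‖A‖ ^ 2 * ‖φ‖ ^ 2 ∧
      (ω * ⟪A φ, X φ⟫_ℂ).re ≤ -ε * ‖φ‖ ^ 2 + 2 * (‖A‖ * ‖X‖ + ε) * s * ‖φ‖ := by
  have hT := isSelfAdjoint_adjoint_comp_self A
  have hspec := spectrum_adjoint_comp_self_subset A
  set φ₁ := cfc (cutoff (‖A‖ ^ 2) δ) (adjoint A ∘L A) φ
  refine ⟨‖φ - φ₁‖, norm_nonneg _, ?_, ?_⟩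
  · rw [apply_norm_sq_eq_inner_adjoint_left]
    exact re_inner_add_mul_norm_sub_cfc_cutoff_sq_le hT hδ hspec φ
  have hφ₁ : ‖φ₁‖ ≤ ‖φ‖ := norm_cfc_apply_le (fun x hx => abs_cutoff_le_one hδ (hspec hx)) φ
  have hq₁ := h φ₁ (cfc_cutoff_apply_mem_spectralSubspace hδ.le hspec φ)
  have hq : (ω * ⟪A φ, X φ⟫_ℂ).re - (ω * ⟪A φ₁, X φ₁⟫_ℂ).re ≤
      ‖A‖ * ‖X‖ * (‖φ - φ₁‖ * (‖φ‖ + ‖φ₁‖)) := by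
    rw [← Complex.sub_re, ← mul_sub]
    exact (re_mul_le_norm_of_norm_eq_one hω _).trans (norm_inner_apply_self_sub_le A X φ φ₁)
  have hn : ‖φ‖ - ‖φ₁‖ ≤ ‖φ - φ₁‖ := norm_sub_norm_le φ φ₁
  nlinarith [mul_le_mul_of_nonneg_right hn (by positivity : 0 ≤ ‖φ‖ + ‖φ₁‖),
    mul_le_mul_of_nonneg_left hφ₁ (by positivity : 0 ≤ (‖A‖ * ‖X‖ + ε) * ‖φ - φ₁‖)]

lemma exists_norm_add_smul_lt (hA : A ≠ 0) (hω : ‖ω‖ = 1) (hδ : 0 < δ) (hε : 0 < ε)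
    (h : ∀ ψ ∈ spectralSubspace (adjoint A ∘L A) (Icc (‖A‖ ^ 2 - δ) (‖A‖ ^ 2)),
      (ω * ⟪A ψ, X ψ⟫_ℂ).re ≤ -ε * ‖ψ‖ ^ 2) :
    ∃ c : ℂ, ‖A + c • X‖ < ‖A‖ := by
  set B := 2 * (‖A‖ * ‖X‖ + ε)
  set t := ε / (B ^ 2 / δ + ‖X‖ ^ 2 + 1)
  have ht : 0 < t := by positivity
  have htε : t * (B ^ 2 / δ + ‖X‖ ^ 2) ≤ ε := by
    have : t * (B ^ 2 / δ + ‖X‖ ^ 2 + 1) = ε := div_mul_cancel₀ _ (by positivity)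
    nlinarith
  have key : ∀ φ, ‖(A + (t * ω) • X) φ‖ ^ 2 ≤ (‖A‖ ^ 2 - t * ε) * ‖φ‖ ^ 2 := by
    intro φ
    obtain ⟨s, hs, hAφ, hq⟩ := exists_norm_sq_add_le_and_re_mul_inner_le hω hδ hε.le h φ
    have hXφ : ‖X φ‖ ^ 2 ≤ ‖X‖ ^ 2 * ‖φ‖ ^ 2 := by
      rw [← mul_pow]
      exact pow_le_pow_left₀ (norm_nonneg _) (X.le_opNorm φ) 2
    have hamgm : 2 * t * B * s * ‖φ‖ ≤ δ * s ^ 2 + t ^ 2 * (B ^ 2 / δ) * ‖φ‖ ^ 2 := by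
      have := sq_nonneg (δ * s - t * B * ‖φ‖)
      have hδ' : δ * (δ * s ^ 2 + t ^ 2 * (B ^ 2 / δ) * ‖φ‖ ^ 2 - 2 * t * B * s * ‖φ‖) =
          (δ * s - t * B * ‖φ‖) ^ 2 := by
        field_simp
        ring
      nlinarith
    rw [norm_add_smul_apply_sq, norm_mul, hω, mul_one, Complex.norm_of_nonneg ht.le, mul_assoc,
      Complex.re_ofReal_mul]
    nlinarith [mul_le_mul_of_nonneg_left hq ht.le, mul_le_mul_of_nonneg_left htε ht.le,
      mul_le_mul_of_nonneg_left hXφ (sq_nonneg t), sq_nonneg ‖φ‖]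
  refine ⟨t * ω, (opNorm_le_sqrt_of_forall_norm_sq_le _ key).trans_lt ?_⟩
  exact (Real.sqrt_lt' (norm_pos_iff.2 hA)).2 (by linarith [mul_pos ht hε])

lemma exists_norm_add_smul_lt_of_sSup_neg (hA : A ≠ 0) (hω : ‖ω‖ = 1) (hδ : 0 < δ)
    (hneg : sSup (reInnerOnSpectralSubspace A X δ ω) < 0) : ∃ c : ℂ, ‖A + c • X‖ < ‖A‖ :=
  exists_norm_add_smul_lt hA hω hδ (neg_pos.2 hneg) fun _ hψ =>
    re_mul_inner_le_mul_norm_sq (fun c _ => smul_mem_spectralSubspace c)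
      (fun φ hφ hφ1 => (le_csSup (bddAbove_reInnerOnSpectralSubspace hω) ⟨φ, hφ, hφ1, rfl⟩).trans_eq
        (neg_neg _).symm) hψ

lemma norm_le_norm_add_smul_of_sSup_nonneg (hA : A ≠ 0) {r : ℝ} (hr : 0 ≤ r)
    (hsup : ∀ δ > 0, 0 ≤ sSup (reInnerOnSpectralSubspace A X δ ω)) :
    ‖A‖ ≤ ‖A + ((r : ℂ) * ω) • X‖ := by
  refine norm_le_norm_add_smul fun ζ hζ => ?_
  have hη : 0 < ζ / (r + 1) := by positivity
  obtain ⟨_, ⟨φ, hφ, hφ1, rfl⟩, hlt⟩ := exists_lt_of_lt_csSup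
    (nonempty_reInnerOnSpectralSubspace hA hζ) ((neg_neg_of_pos hη).trans_le (hsup ζ hζ))
  refine ⟨φ, hφ1, ?_, ?_⟩
  · have := mul_norm_sq_le_re_inner_of_mem_spectralSubspace (isSelfAdjoint_adjoint_comp_self A)
      (spectralSubspace_mono Icc_subset_Ici_self hφ)
    rwa [hφ1, one_pow, mul_one, ← apply_norm_sq_eq_inner_adjoint_left] at this
  · have hrζ : r * (ζ / (r + 1)) ≤ ζ := by
      rw [mul_div_assoc', div_le_iff₀ (by positivity)]
      nlinarith
    rw [mul_assoc, Complex.re_ofReal_mul]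
    nlinarith

end Birkhoff

theorem birkhoff_orthogonality_BHK
    {H K : Type*} [NormedAddCommGroup H] [InnerProductSpace ℂ H] [CompleteSpace H]
    [NormedAddCommGroup K] [InnerProductSpace ℂ K] [CompleteSpace K]
    (A X : H →L[ℂ] K) (hA : A ≠ 0) :
    (∀ lam : ℂ, ‖A + lam • X‖ ≥ ‖A‖) ↔
      (∀ δ : ℝ, 0 < δ → ∀ θ ∈ Set.Ico (0 : ℝ) (2 * π),
        sSup {r : ℝ | ∃ φ : H,
          φ ∈ spectralSubspace ((adjoint A) ∘L A) (Set.Icc (‖A‖ ^ 2 - δ) (‖A‖ ^ 2)) ∧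
          ‖φ‖ = 1 ∧ r = (Complex.exp (θ * Complex.I) * (inner ℂ (A φ) (X φ) : ℂ)).re} ≥ 0) := by
  have hω (θ : ℝ) : ‖Complex.exp (θ * Complex.I)‖ = 1 := Complex.norm_exp_ofReal_mul_I θ
  constructor
  · intro horth δ hδ θ _
    by_contra! hneg
    obtain ⟨c, hc⟩ := exists_norm_add_smul_lt_of_sSup_neg hA (hω θ) hδ hneg
    exact (horth c).not_gt hc
  · intro hsup c
    obtain ⟨θ, hθ, hc⟩ := exists_mem_Ico_eq_norm_mul_exp c
    rw [hc]
    exact norm_le_norm_add_smul_of_sSup_nonneg hA (norm_nonneg c) fun δ hδ => hsup δ hδ θ hθ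
end

section
/- Let X be a normed space, W a subspace of X, x ∈ X nonzero, and ε ∈ [0,1). Then ‖x + w‖² ≥ ‖x‖² − 2ε‖x‖‖w‖ for all w ∈ W if and only if there exists f in the subdifferential ∂‖x‖ (i.e., ‖f‖ = 1 and f(x) = ‖x‖) such that the restriction of f to W has norm at most ε. -/
open Filter Set Topology
open scoped NNReal

/-!
Along the segment `t ↦ x + t • w`, `t ∈ (0, 1]`, convexity of the norm gives
`‖x + t • w‖ ≤ (1 - t) ‖x‖ + t ‖x + w‖`; feeding this into the quadratic condition for `t • w`,
dividing by `t` and letting `t → 0` yields the linear condition `‖x‖ ≤ ‖x + w‖ + ε ‖w‖` on `W`,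
which conversely implies the quadratic one. The linear condition says exactly that `x` attains its
norm for the seminorm `p v = ⨅ w ∈ W, ‖v + w‖ + ε ‖w‖`. A Hahn–Banach functional dominated by `p`
and equal to `p` at `x` lies in `∂‖x‖` and is bounded by `ε` on `W`, since `p ≤ ‖·‖` everywhere and
`p ≤ ε ‖·‖` on `W`.
-/

theorem le_add_mul_of_forall_sq_le {a b s ε : ℝ} (ha : 0 < a)
    (h : ∀ t ∈ Ioc (0 : ℝ) 1, a ^ 2 - 2 * ε * a * (t * b) ≤ ((1 - t) * a + t * s) ^ 2) :
    a ≤ s + ε * b := by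
  -- `(1 - t) * a + t * s = a - t * (a - s)`: expand and divide by `t`
  have hdiv : ∀ t ∈ Ioc (0 : ℝ) 1, 2 * a * (a - s) - t * (a - s) ^ 2 ≤ 2 * ε * a * b := by
    intro t ht
    have := h t ht
    refine le_of_mul_le_mul_left ?_ ht.1
    nlinarith
  have hlim : Tendsto (fun t : ℝ => 2 * a * (a - s) - t * (a - s) ^ 2) (𝓝[>] 0)
      (𝓝 (2 * a * (a - s))) := by
    have hcont : Continuous (fun t : ℝ => 2 * a * (a - s) - t * (a - s) ^ 2) := by fun_prop
    simpa using (hcont.tendsto 0).mono_left nhdsWithin_le_nhds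
  have := le_of_tendsto hlim (eventually_of_mem (Ioc_mem_nhdsGT one_pos) hdiv)
  nlinarith

theorem sq_sub_le_sq_of_le_add {a b s ε : ℝ} (ha : 0 ≤ a) (h : a ≤ s + ε * b) :
    a ^ 2 - 2 * ε * a * b ≤ s ^ 2 := by
  rcases le_or_gt (ε * b) a with hab | hab
  · nlinarith [sq_nonneg (ε * b)]
  · nlinarith [sq_nonneg s]

section RCLike

variable {𝕜 E : Type*} [RCLike 𝕜]

theorem norm_add_ofReal_smul_le [SeminormedAddCommGroup E] [NormedSpace 𝕜 E] (x w : E) {t : ℝ}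
    (ht0 : 0 ≤ t) (ht1 : t ≤ 1) : ‖x + (t : 𝕜) • w‖ ≤ (1 - t) * ‖x‖ + t * ‖x + w‖ := by
  have hsplit : x + (t : 𝕜) • w = ((1 - t : ℝ) : 𝕜) • x + (t : 𝕜) • (x + w) := by
    rw [smul_add, ← add_assoc, ← add_smul]
    push_cast
    simp
  calc ‖x + (t : 𝕜) • w‖ ≤ ‖((1 - t : ℝ) : 𝕜) • x‖ + ‖(t : 𝕜) • (x + w)‖ :=
        hsplit ▸ norm_add_le _ _
    _ = (1 - t) * ‖x‖ + t * ‖x + w‖ := by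
        rw [norm_smul, norm_smul, RCLike.norm_ofReal, RCLike.norm_ofReal,
          abs_of_nonneg (sub_nonneg.2 ht1), abs_of_nonneg ht0]

theorem forall_sq_le_iff_forall_norm_le [NormedAddCommGroup E] [NormedSpace 𝕜 E]
    (W : Submodule 𝕜 E) {x : E} (hx : x ≠ 0) (ε : ℝ) :
    (∀ w ∈ W, ‖x‖ ^ 2 - 2 * ε * ‖x‖ * ‖w‖ ≤ ‖x + w‖ ^ 2) ↔
      ∀ w ∈ W, ‖x‖ ≤ ‖x + w‖ + ε * ‖w‖ := by
  refine ⟨fun h w hw => le_add_mul_of_forall_sq_le (norm_pos_iff.2 hx) ?_, fun h w hw => ?_⟩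
  · rintro t ⟨ht0, ht1⟩
    have htw := h _ (W.smul_mem (t : 𝕜) hw)
    rw [norm_smul, RCLike.norm_ofReal, abs_of_pos ht0] at htw
    exact htw.trans (pow_le_pow_left₀ (norm_nonneg _) (norm_add_ofReal_smul_le x w ht0.le ht1) 2)
  · exact sq_sub_le_sq_of_le_add (norm_nonneg x) (h w hw)

end RCLike

namespace Submodule

variable {𝕜 E : Type*} [NormedField 𝕜] [SeminormedAddCommGroup E] [NormedSpace 𝕜 E]
  (W : Submodule 𝕜 E) (ε : ℝ≥0)

private theorem bddBelow_range_norm_add_add (v : E) :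
    BddBelow (range fun w : W => ‖v + w‖ + ε * ‖(w : E)‖) :=
  ⟨0, by rintro _ ⟨w, rfl⟩; positivity⟩

noncomputable def normInfConv : Seminorm 𝕜 E :=
  Seminorm.ofSMulLE (fun v => ⨅ w : W, ‖v + w‖ + ε * ‖(w : E)‖)
    (le_antisymm (by simpa using ciInf_le (W.bddBelow_range_norm_add_add ε 0) 0)
      (le_ciInf fun _ => by positivity))
    (fun u v => le_ciInf_add_ciInf fun w₁ w₂ => by
      refine (ciInf_le (W.bddBelow_range_norm_add_add ε _) (w₁ + w₂)).trans ?_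
      rw [coe_add, show u + v + ((w₁ : E) + w₂) = (u + w₁) + (v + w₂) by abel]
      have := mul_le_mul_of_nonneg_left (norm_add_le (w₁ : E) w₂) ε.coe_nonneg
      linarith [norm_add_le (u + (w₁ : E)) (v + w₂)])
    (fun r v => by
      rw [Real.mul_iInf_of_nonneg (norm_nonneg r)]
      refine le_ciInf fun w => (ciInf_le (W.bddBelow_range_norm_add_add ε _) (r • w)).trans ?_
      simp only [coe_smul, ← smul_add, norm_smul]
      exact le_of_eq (by ring))

theorem normInfConv_le_norm_add_add (v : E) {w : E} (hw : w ∈ W) :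
    W.normInfConv ε v ≤ ‖v + w‖ + ε * ‖w‖ :=
  ciInf_le (W.bddBelow_range_norm_add_add ε v) ⟨w, hw⟩

theorem le_normInfConv_iff {v : E} {c : ℝ} :
    c ≤ W.normInfConv ε v ↔ ∀ w ∈ W, c ≤ ‖v + w‖ + ε * ‖w‖ :=
  ⟨fun h _ hw => h.trans (W.normInfConv_le_norm_add_add ε v hw),
    fun h => le_ciInf fun w => h w w.2⟩

theorem normInfConv_le_norm (v : E) : W.normInfConv ε v ≤ ‖v‖ := by
  simpa using W.normInfConv_le_norm_add_add ε v W.zero_mem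

theorem normInfConv_le_of_mem {w : E} (hw : w ∈ W) : W.normInfConv ε w ≤ ε * ‖w‖ := by
  simpa using W.normInfConv_le_norm_add_add ε w (W.neg_mem hw)

end Submodule

theorem Seminorm.exists_dual_vector {𝕜 E : Type*} [RCLike 𝕜] [AddCommGroup E] [Module 𝕜 E]
    (p : Seminorm 𝕜 E) (x : E) : ∃ g : Module.Dual 𝕜 E, g x = p x ∧ ∀ v, ‖g v‖ ≤ p v := by
  rcases eq_or_ne x 0 with rfl | hx
  · exact ⟨0, by simp, fun v => by simp⟩
  set c := LinearEquiv.coord 𝕜 E x hx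
  set f : Module.Dual 𝕜 (𝕜 ∙ x) := (p x : 𝕜) • c.toLinearMap
  have hfp : ∀ y, ‖f y‖ ≤ p y := fun y => le_of_eq <| calc
    ‖f y‖ = ‖c y‖ * p x := by simp [f, norm_smul, mul_comm]
    _ = p (c y • x) := (map_smul_eq_mul p _ _).symm
    _ = p y := by rw [LinearEquiv.coord_apply_smul]
  obtain ⟨g, hg, hgp⟩ := Module.Dual.exists_extension_of_le_seminorm (𝕜 ∙ x) f hfp
  refine ⟨g, ?_, hgp⟩
  simpa [f, c, -algebraMap_smul, LinearEquiv.coord_self] using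
    hg ⟨x, Submodule.mem_span_singleton_self x⟩

section Birkhoff

variable {𝕜 E : Type*} [RCLike 𝕜] {ε : ℝ}

theorem norm_le_norm_add_add_of_norm_comp_subtypeL_le [SeminormedAddCommGroup E]
    [NormedSpace 𝕜 E] {W : Submodule 𝕜 E} {x : E} {f : E →L[𝕜] 𝕜} (hf : ‖f‖ ≤ 1)
    (hfx : f x = ‖x‖) (hfW : ‖f ∘L W.subtypeL‖ ≤ ε) {w : E} (hw : w ∈ W) :
    ‖x‖ ≤ ‖x + w‖ + ε * ‖w‖ :=
  calc ‖x‖ = ‖f (x + w) - f w‖ := by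
        rw [map_add, add_sub_cancel_right, hfx, RCLike.norm_ofReal, abs_norm]
    _ ≤ ‖f (x + w)‖ + ‖f w‖ := norm_sub_le _ _
    _ ≤ ‖x + w‖ + ε * ‖w‖ :=
        add_le_add ((f.le_of_opNorm_le hf _).trans_eq (one_mul _))
          ((f ∘L W.subtypeL).le_of_opNorm_le hfW ⟨w, hw⟩)

theorem exists_norm_eq_one_apply_eq_norm_norm_comp_subtypeL_le [NormedAddCommGroup E]
    [NormedSpace 𝕜 E] {W : Submodule 𝕜 E} {x : E} (hx : x ≠ 0) (hε : 0 ≤ ε)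
    (h : ∀ w ∈ W, ‖x‖ ≤ ‖x + w‖ + ε * ‖w‖) :
    ∃ f : E →L[𝕜] 𝕜, ‖f‖ = 1 ∧ f x = ‖x‖ ∧ ‖f ∘L W.subtypeL‖ ≤ ε := by
  set p := W.normInfConv ⟨ε, hε⟩
  have hpx : p x = ‖x‖ := le_antisymm (W.normInfConv_le_norm _ x) ((W.le_normInfConv_iff _).2 h)
  obtain ⟨g, hgx, hgp⟩ := p.exists_dual_vector x
  set f := g.mkContinuous 1 fun v => by simpa using (hgp v).trans (W.normInfConv_le_norm _ v)
  have hfx : f x = ‖x‖ := by simp [f, hgx, hpx]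
  have hf1 : ‖f‖ ≤ 1 := LinearMap.mkContinuous_norm_le _ zero_le_one _
  refine ⟨f, le_antisymm hf1 ?_, hfx, ?_⟩
  · have := f.le_opNorm x
    rw [hfx, RCLike.norm_ofReal, abs_norm] at this
    exact one_le_of_le_mul_right₀ (norm_pos_iff.2 hx) this
  · exact (f ∘L W.subtypeL).opNorm_le_bound hε fun w =>
      (hgp w).trans (W.normInfConv_le_of_mem _ w.2)

end Birkhoff

theorem epsilon_birkhoff_subspace_iff
    {𝕜 X : Type*} [RCLike 𝕜] [NormedAddCommGroup X] [NormedSpace 𝕜 X]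
    (W : Submodule 𝕜 X) (x : X) (hx : x ≠ 0) (ε : ℝ) (hε : ε ∈ Set.Ico (0 : ℝ) 1) :
    (∀ w ∈ W, ‖x + w‖ ^ 2 ≥ ‖x‖ ^ 2 - 2 * ε * ‖x‖ * ‖w‖) ↔
      ∃ f : X →L[𝕜] 𝕜, ‖f‖ = 1 ∧ f x = (‖x‖ : 𝕜) ∧ ‖f ∘L W.subtypeL‖ ≤ ε := by
  refine (forall_sq_le_iff_forall_norm_le W hx ε).trans
    ⟨exists_norm_eq_one_apply_eq_norm_norm_comp_subtypeL_le hx hε.1, ?_⟩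
  rintro ⟨f, hf, hfx, hfW⟩ w hw
  exact norm_le_norm_add_add_of_norm_comp_subtypeL_le hf.le hfx hfW hw
end

section
/- Let X be a normed space, x, y ∈ X with x ≠ 0, and ε ∈ [0,1). Then ‖x + λy‖² ≥ ‖x‖² − 2ε‖x‖‖λy‖ for all scalars λ if and only if there exists f ∈ X* with ‖f‖ = 1 and f(x) = ‖x‖ such that |f(y)| ≤ ε‖y‖. -/
/-!
The quadratic condition is equivalent to its linear form `‖x‖ - ε ‖λ • y‖ ≤ ‖x + λ • y‖`: one
way by squaring, the other because `t ↦ ‖x + t • λ • y‖` is convex, so comparing both sides of the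
quadratic condition at `t → 0⁺` bounds the slope `‖x + λ • y‖ - ‖x‖` from below.
The linear form says exactly that `‖x‖ ≤ p x` for the seminorm
`p v = ⨅ λ, ‖v - λ • y‖ + ε ‖λ • y‖`, which lies below the norm and has `p y ≤ ε ‖y‖`;
a Hahn–Banach extension of `c • x ↦ c ‖x‖` dominated by `p` is the required functional.
-/

open Filter Set NNReal Topology

section BirkhoffSeminorm

variable (𝕜 : Type*) {X : Type*} [NormedField 𝕜] [SeminormedAddCommGroup X] [NormedSpace 𝕜 X]

private lemma bddBelow_range_norm_sub_smul_add (v y : X) (ε : ℝ≥0) :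
    BddBelow (range fun l : 𝕜 => ‖v - l • y‖ + ε * ‖l • y‖) :=
  ⟨0, by rintro _ ⟨l, rfl⟩; positivity⟩

noncomputable def birkhoffSeminorm (y : X) (ε : ℝ≥0) : Seminorm 𝕜 X :=
  .ofSMulLE (fun v => ⨅ l : 𝕜, ‖v - l • y‖ + ε * ‖l • y‖)
    (le_antisymm ((ciInf_le (bddBelow_range_norm_sub_smul_add 𝕜 0 y ε) 0).trans (by simp))
      (le_ciInf fun _ => by positivity))
    (fun u v => by
      refine le_ciInf_add_ciInf fun l m =>
        (ciInf_le (bddBelow_range_norm_sub_smul_add 𝕜 _ y ε) (l + m)).trans ?_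
      have hsub : u + v - (l + m) • y = (u - l • y) + (v - m • y) := by rw [add_smul]; abel
      have hsmul : ‖(l + m) • y‖ ≤ ‖l • y‖ + ‖m • y‖ := by rw [add_smul]; exact norm_add_le _ _
      rw [hsub]
      linarith [norm_add_le (u - l • y) (v - m • y), mul_le_mul_of_nonneg_left hsmul ε.coe_nonneg])
    (fun r v => by
      rw [Real.mul_iInf_of_nonneg (norm_nonneg r)]
      refine le_ciInf fun l =>
        (ciInf_le (bddBelow_range_norm_sub_smul_add 𝕜 _ y ε) (r * l)).trans ?_
      rw [mul_smul, ← smul_sub, norm_smul, norm_smul r (l • y)]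
      exact (by ring : _ = _).le)

variable {𝕜} {y : X} {ε : ℝ≥0}

theorem birkhoffSeminorm_le (v : X) (l : 𝕜) :
    birkhoffSeminorm 𝕜 y ε v ≤ ‖v - l • y‖ + ε * ‖l • y‖ :=
  ciInf_le (bddBelow_range_norm_sub_smul_add 𝕜 v y ε) l

theorem birkhoffSeminorm_le_norm (v : X) : birkhoffSeminorm 𝕜 y ε v ≤ ‖v‖ :=
  (birkhoffSeminorm_le v 0).trans_eq (by simp)

theorem birkhoffSeminorm_self_le : birkhoffSeminorm 𝕜 y ε y ≤ ε * ‖y‖ :=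
  (birkhoffSeminorm_le y 1).trans_eq (by simp)

theorem norm_le_birkhoffSeminorm {x : X} (h : ∀ l : 𝕜, ‖x‖ - ε * ‖l • y‖ ≤ ‖x + l • y‖) :
    ‖x‖ ≤ birkhoffSeminorm 𝕜 y ε x :=
  le_ciInf fun l => by
    have := h (-l)
    rw [neg_smul, ← sub_eq_add_neg, norm_neg] at this
    linarith

end BirkhoffSeminorm

theorem exists_dual_vector_le_seminorm {𝕜 E : Type*} [RCLike 𝕜] [NormedAddCommGroup E]
    [NormedSpace 𝕜 E] (p : Seminorm 𝕜 E) (hp : ∀ v, p v ≤ ‖v‖) {x : E} (hx : x ≠ 0)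
    (hpx : ‖x‖ ≤ p x) : ∃ f : E →L[𝕜] 𝕜, ‖f‖ = 1 ∧ f x = ‖x‖ ∧ ∀ v, ‖f v‖ ≤ p v := by
  let f₀ : E →ₗ.[𝕜] 𝕜 := LinearPMap.mkSpanSingleton x (‖x‖ : 𝕜) hx
  have hf₀ : ∀ v, ‖f₀.toFun v‖ ≤ p v := by
    rintro ⟨v, hv⟩
    obtain ⟨c, rfl⟩ := Submodule.mem_span_singleton.1 hv
    rw [LinearPMap.toFun_eq_coe, LinearPMap.mkSpanSingleton'_apply, map_smul_eq_mul,
      RingHom.id_apply, smul_eq_mul, norm_mul, RCLike.norm_ofReal, abs_norm]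
    exact mul_le_mul_of_nonneg_left hpx (norm_nonneg c)
  obtain ⟨g, hg_ext, hg_le⟩ := Module.Dual.exists_extension_of_le_seminorm _ _ hf₀
  have hgx : g x = ‖x‖ := by
    rw [hg_ext ⟨x, Submodule.mem_span_singleton_self x⟩]
    exact LinearPMap.mkSpanSingleton'_apply_self _ _ _ _
  let f := g.mkContinuous 1 fun v => by simpa using (hg_le v).trans (hp v)
  refine ⟨f, le_antisymm ?_ ?_, hgx, hg_le⟩
  · exact g.mkContinuous_norm_le zero_le_one _
  · have hle := f.le_opNorm x
    simp only [f, LinearMap.mkContinuous_apply, hgx, RCLike.norm_ofReal, abs_norm] at hle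
    exact one_le_of_le_mul_right₀ (norm_pos_iff.2 hx) hle

theorem le_of_forall_Ioo_le_add_mul {a b c δ : ℝ} (hδ : 0 < δ)
    (h : ∀ t ∈ Ioo 0 δ, c ≤ a + t * b) : c ≤ a := by
  have hlim : Tendsto (fun t => a + t * b) (𝓝[>] 0) (𝓝 a) := by
    refine (Continuous.tendsto' ?_ 0 a (by simp)).mono_left nhdsWithin_le_nhds
    fun_prop
  exact ge_of_tendsto hlim (eventually_of_mem (Ioo_mem_nhdsGT hδ) h)

theorem sq_sub_two_mul_le_sq_of_sub_le {a b c : ℝ} (ha : 0 ≤ a) (h : a - b ≤ c) :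
    a ^ 2 - 2 * a * b ≤ c ^ 2 := by
  rcases le_total b a with hba | hab
  · nlinarith [pow_le_pow_left₀ (sub_nonneg.2 hba) h 2, sq_nonneg b]
  · nlinarith

section RCLike

variable {𝕜 X : Type*} [RCLike 𝕜] [SeminormedAddCommGroup X] [NormedSpace 𝕜 X]

theorem norm_add_ofReal_smul_le_s8 {t : ℝ} (ht₀ : 0 ≤ t) (ht₁ : t ≤ 1) (x w : X) :
    ‖x + (t : 𝕜) • w‖ ≤ ‖x‖ + t * (‖x + w‖ - ‖x‖) := by
  have hcomb : x + (t : 𝕜) • w = ((1 - t : ℝ) : 𝕜) • x + (t : 𝕜) • (x + w) := by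
    rw [smul_add, ← add_assoc, ← add_smul]
    norm_num
  calc ‖x + (t : 𝕜) • w‖ ≤ ‖((1 - t : ℝ) : 𝕜) • x‖ + ‖(t : 𝕜) • (x + w)‖ :=
        hcomb ▸ norm_add_le _ _
    _ = ‖x‖ + t * (‖x + w‖ - ‖x‖) := by
        rw [norm_smul, norm_smul, RCLike.norm_ofReal, RCLike.norm_ofReal, abs_of_nonneg ht₀,
          abs_of_nonneg (sub_nonneg.2 ht₁)]
        ring

theorem sub_le_norm_add_of_forall_sq_le {x w : X} (hx : 0 < ‖x‖) {c : ℝ}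
    (h : ∀ t ∈ Ioo (0 : ℝ) 1, ‖x‖ ^ 2 - 2 * ‖x‖ * (t * c) ≤ ‖x + (t : 𝕜) • w‖ ^ 2) :
    ‖x‖ - c ≤ ‖x + w‖ := by
  set d := ‖x + w‖ - ‖x‖
  have hslope : ∀ t ∈ Ioo (0 : ℝ) 1, -(2 * ‖x‖ * c) ≤ 2 * ‖x‖ * d + t * d ^ 2 := by
    intro t ht
    have hconv := norm_add_ofReal_smul_le_s8 (𝕜 := 𝕜) ht.1.le ht.2.le x w
    have hsq := pow_le_pow_left₀ (norm_nonneg _) hconv 2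
    have := h t ht
    refine le_of_mul_le_mul_left ?_ ht.1
    nlinarith
  have := le_of_forall_Ioo_le_add_mul one_pos hslope
  nlinarith

theorem sub_le_norm_add_smul_of_dual {x y : X} {ε : ℝ} {f : X →L[𝕜] 𝕜} (hf : ‖f‖ ≤ 1)
    (hfx : f x = ‖x‖) (hfy : ‖f y‖ ≤ ε * ‖y‖) (l : 𝕜) :
    ‖x‖ - ε * ‖l • y‖ ≤ ‖x + l • y‖ := by
  have hx : ‖x‖ ≤ ‖f (x + l • y)‖ + ‖l‖ * ‖f y‖ := by
    calc ‖x‖ = ‖f (x + l • y) - l * f y‖ := by simp [hfx]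
      _ ≤ ‖f (x + l • y)‖ + ‖l‖ * ‖f y‖ := (norm_sub_le _ _).trans_eq (by rw [norm_mul])
  have hxy : ‖f (x + l • y)‖ ≤ ‖x + l • y‖ := (f.le_of_opNorm_le hf _).trans_eq (one_mul _)
  have hly : ‖l‖ * ‖f y‖ ≤ ε * ‖l • y‖ := by
    rw [norm_smul]; linarith [mul_le_mul_of_nonneg_left hfy (norm_nonneg l)]
  linarith

end RCLike

theorem epsilon_birkhoff_vector_iff
    {𝕜 X : Type*} [RCLike 𝕜] [NormedAddCommGroup X] [NormedSpace 𝕜 X]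
    (x y : X) (hx : x ≠ 0) (ε : ℝ) (hε : ε ∈ Set.Ico (0 : ℝ) 1) :
    (∀ lam : 𝕜, ‖x + lam • y‖ ^ 2 ≥ ‖x‖ ^ 2 - 2 * ε * ‖x‖ * ‖lam • y‖) ↔
      ∃ f : X →L[𝕜] 𝕜, ‖f‖ = 1 ∧ f x = (‖x‖ : 𝕜) ∧ ‖f y‖ ≤ ε * ‖y‖ := by
  lift ε to ℝ≥0 using hε.1
  constructor
  · intro h
    have hlin : ∀ l : 𝕜, ‖x‖ - ε * ‖l • y‖ ≤ ‖x + l • y‖ := fun l =>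
      sub_le_norm_add_of_forall_sq_le (norm_pos_iff.2 hx) fun t ht => by
        have ht_smul : ‖(t : 𝕜) • l • y‖ = t * ‖l • y‖ := by
          rw [norm_smul, RCLike.norm_ofReal, abs_of_pos ht.1]
        have := h ((t : 𝕜) * l)
        rw [mul_smul, ht_smul] at this
        linarith
    obtain ⟨f, hf1, hfx, hfN⟩ := exists_dual_vector_le_seminorm (birkhoffSeminorm 𝕜 y ε)
      birkhoffSeminorm_le_norm hx (norm_le_birkhoffSeminorm hlin)
    exact ⟨f, hf1, hfx, (hfN y).trans birkhoffSeminorm_self_le⟩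
  · rintro ⟨f, hf1, hfx, hfy⟩ l
    have := sq_sub_two_mul_le_sq_of_sub_le (norm_nonneg _)
      (sub_le_norm_add_smul_of_dual hf1.le hfx hfy l)
    linarith
end

section
/- Let X, Y be normed spaces, S : X → Y a bounded linear map, y₀ ∈ Y, L(x) = S(x) + y₀, and g : Y → ℝ a continuous convex function. Then for every a ∈ X, the subdifferential of g ∘ L at a equals S*(∂g(L(a))), i.e., ∂(g ∘ L)(a) = { x* ∘ S : x* ∈ ∂g(L(a)) } (precomposition with S). -/
/-!
Given a subgradient `x'` of `g ∘ L` at `a`, the affine set `{(L x, g (L a) + x' (x - a))}` misses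
the open strict epigraph of `g`, so Hahn–Banach separates the two by a closed hyperplane. The
hyperplane passes through `(L a, g (L a))`, hence is not vertical, and is therefore the graph of an
affine minorant `y ↦ g (L a) + y' (y - L a)` of `g`. Since it also lies above the affine set, which
is a translate of a linear subspace, `y' ∘ S ≥ x'` and hence `y' ∘ S = x'`.
-/

open Set
open scoped Pointwise

section SupportingHyperplane

variable {E : Type*} [TopologicalSpace E] [AddCommGroup E] [Module ℝ E]

theorem ContinuousLinearMap.apply_prod_real (f : StrongDual ℝ (E × ℝ)) (y : E) (t : ℝ) :
    f (y, t) = f (y, 0) + t * f (0, 1) := by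
  rw [← smul_eq_mul, ← map_smul, ← map_add, Prod.smul_mk, smul_zero, smul_eq_mul, mul_one,
    Prod.mk_add_mk, add_zero, zero_add]

variable [IsTopologicalAddGroup E] [ContinuousSMul ℝ E]

theorem ConvexOn.exists_subgradient_of_disjoint_strictEpigraph {g : E → ℝ}
    (hg_cont : Continuous g) (hg_conv : ConvexOn ℝ univ g) {B : Set (E × ℝ)} (hB : Convex ℝ B)
    (hdisj : Disjoint {p | g p.1 < p.2} B) {y₁ : E} (hy₁ : (y₁, g y₁) ∈ B) :
    ∃ φ : StrongDual ℝ E, (∀ y, φ (y - y₁) ≤ g y - g y₁) ∧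
      ∀ p ∈ B, p.2 - g y₁ ≤ φ (p.1 - y₁) := by
  have hA_conv : Convex ℝ {p : E × ℝ | g p.1 < p.2} := by
    simpa only [mem_univ, true_and] using hg_conv.convex_strict_epigraph
  have hA_open : IsOpen {p : E × ℝ | g p.1 < p.2} :=
    isOpen_lt (hg_cont.comp continuous_fst) continuous_snd
  obtain ⟨f, u, hfA, hfB⟩ := geometric_hahn_banach_open hA_conv hA_open hB hdisj
  set c := f (0, 1)
  -- Not vertical: `(y₁, g y₁) ∈ B` while `(y₁, g y₁ + 1)` is in the strict epigraph.
  have hc : 0 < -c := by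
    have := hfA (y₁, g y₁ + 1) (lt_add_one (g y₁))
    rw [f.apply_prod_real] at this
    linarith [hfB _ hy₁, f.apply_prod_real y₁ (g y₁)]
  set φ : StrongDual ℝ E := (-c)⁻¹ • f.comp (ContinuousLinearMap.inl ℝ E ℝ)
  have hf : ∀ p : E × ℝ, f p = -c * (φ p.1 - p.2) := fun ⟨y, t⟩ => by
    simp only [φ, smul_apply, ContinuousLinearMap.comp_apply, ContinuousLinearMap.inl_apply,
      smul_eq_mul, mul_sub, mul_inv_cancel_left₀ hc.ne']
    rw [f.apply_prod_real]
    ring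
  have hφB : ∀ p ∈ B, u / -c ≤ φ p.1 - p.2 := fun p hp => by
    rw [div_le_iff₀' hc, ← hf]
    exact hfB p hp
  have hφg : ∀ y, φ y - g y ≤ u / -c := fun y => by
    refine sub_le_comm.mp (le_of_forall_gt_imp_ge_of_dense fun t ht => ?_)
    have := hfA (y, t) ht
    rw [hf, ← lt_div_iff₀' hc] at this
    linarith
  refine ⟨φ, fun y => ?_, fun p hp => ?_⟩
  · linarith [map_sub φ y y₁, hφg y, hφB _ hy₁]
  · linarith [map_sub φ p.1 y₁, hφg y₁, hφB p hp]

end SupportingHyperplane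

theorem subdifferential_chain_rule
    {X Y : Type*} [NormedAddCommGroup X] [NormedSpace ℝ X]
    [NormedAddCommGroup Y] [NormedSpace ℝ Y]
    (S : X →L[ℝ] Y) (y₀ : Y) (L : X → Y) (hL : ∀ x, L x = S x + y₀)
    (g : Y → ℝ) (hg_cont : Continuous g) (hg_conv : ConvexOn ℝ Set.univ g) (a : X) :
    {x' : X →L[ℝ] ℝ | ∀ x : X, x' (x - a) ≤ g (L x) - g (L a)} =
      {x' : X →L[ℝ] ℝ | ∃ y' : Y →L[ℝ] ℝ,
        (∀ y : Y, y' (y - L a) ≤ g y - g (L a)) ∧ x' = y'.comp S} := by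
  have hLS : ∀ x, L x - L a = S (x - a) := fun x => by rw [hL, hL, map_sub]; abel
  ext x'
  constructor
  · intro hx
    set B : Set (Y × ℝ) :=
      (L a, g (L a)) +ᵥ (LinearMap.range (S.prod x' : X →ₗ[ℝ] Y × ℝ) : Set (Y × ℝ))
    have hB : Convex ℝ B := (Submodule.convex _).vadd _
    have hxB : ∀ x, (L x, g (L a) + x' (x - a)) ∈ B := fun x =>
      ⟨_, ⟨x - a, rfl⟩, by simp [← hLS]⟩
    have hBx : ∀ p ∈ B, ∃ x, p = (L x, g (L a) + x' (x - a)) := by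
      rintro _ ⟨_, ⟨v, rfl⟩, rfl⟩
      exact ⟨a + v, by simp [hL, add_right_comm]⟩
    have hdisj : Disjoint {p : Y × ℝ | g p.1 < p.2} B := disjoint_left.mpr fun p hp hpB => by
      obtain ⟨x, rfl⟩ := hBx p hpB
      exact (hx x).not_gt (sub_lt_iff_lt_add'.mpr hp)
    obtain ⟨y', hy'g, hy'B⟩ :=
      hg_conv.exists_subgradient_of_disjoint_strictEpigraph hg_cont hB hdisj (by simpa using hxB a)
    have hle : ∀ v, x' v ≤ y' (S v) := fun v => by
      simpa [hLS] using hy'B _ (hxB (a + v))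
    refine ⟨y', hy'g, ContinuousLinearMap.ext fun v => le_antisymm (hle v) ?_⟩
    simpa using hle (-v)
  · rintro ⟨y', hy', rfl⟩ x
    simpa [hLS] using hy' (L x)
end

section
/- Let f₁, f₂ : X → ℝ be continuous convex functions on a normed space X. Then for every a ∈ X, ∂(f₁ + f₂)(a) = ∂f₁(a) + ∂f₂(a) (Minkowski sum of the two subdifferential sets). -/
open Filter Set Pointwise

theorem subdifferential_sum_rule
    {X : Type*} [NormedAddCommGroup X] [NormedSpace ℝ X]
    (f₁ f₂ : X → ℝ) (h₁c : Continuous f₁) (h₂c : Continuous f₂)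
    (h₁ : ConvexOn ℝ Set.univ f₁) (h₂ : ConvexOn ℝ Set.univ f₂) (a : X) :
    {x' : X →L[ℝ] ℝ | ∀ x : X, x' (x - a) ≤ (f₁ x + f₂ x) - (f₁ a + f₂ a)} =
      {x' : X →L[ℝ] ℝ | ∀ x : X, x' (x - a) ≤ f₁ x - f₁ a} +
      {x' : X →L[ℝ] ℝ | ∀ x : X, x' (x - a) ≤ f₂ x - f₂ a} := by
  ext x'
  constructor
  · intro hx'
    -- g₁ x = f₁ x - f₁ a - x' (x - a), convex
    set g₁ : X → ℝ := fun x => f₁ x - f₁ a - x' (x - a) with hg₁def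
    have hg₁conv : ConvexOn ℝ Set.univ g₁ := by
      have : g₁ = fun x => f₁ x + (-(f₁ a) + (-(x' x) + x' a)) := by
        funext x; simp [hg₁def, map_sub]; ring
      rw [this]
      exact h₁.add ((convexOn_const _ convex_univ).add
        (((ContinuousLinearMap.neg.neg x').toLinearMap.convexOn convex_univ).add
          (convexOn_const _ convex_univ)))
    -- A : strict epigraph of g₁, open and convex
    set A : Set (X × ℝ) := {p | g₁ p.1 < p.2} with hAdef
    have hAopen : IsOpen A := by
      have : Continuous fun p : X × ℝ => g₁ p.1 :=
        (((h₁c.sub continuous_const).sub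
          (x'.continuous.comp (continuous_id.sub continuous_const)))).comp continuous_fst
      exact isOpen_lt this continuous_snd
    have hAconv : Convex ℝ A := by
      rintro ⟨x, r⟩ hx ⟨y, t⟩ hy b c hb hc hbc
      simp only [hAdef, Set.mem_setOf_eq] at hx hy ⊢
      have h1 : g₁ (b • x + c • y) ≤ b * g₁ x + c * g₁ y := by
        simpa using hg₁conv.2 (Set.mem_univ x) (Set.mem_univ y) hb hc hbc
      have h2 : b * g₁ x + c * g₁ y < b * r + c * t := by
        rcases hb.eq_or_lt with hb0 | hb0
        · have hc1 : c = 1 := by linarith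
          simpa [← hb0, hc1] using hy
        · rcases hc.eq_or_lt with hc0 | hc0
          · have hb1 : b = 1 := by linarith
            simpa [← hc0, hb1] using hx
          · have := add_lt_add (mul_lt_mul_of_pos_left hx hb0)
              (mul_lt_mul_of_pos_left hy hc0)
            linarith
      calc g₁ (b • x + c • y) ≤ b * g₁ x + c * g₁ y := h1
        _ < b * r + c * t := h2
        _ = b • r + c • t := by simp
    -- B : hypograph of x ↦ f₂ a - f₂ x, convex
    set B : Set (X × ℝ) := {p | p.2 ≤ f₂ a - f₂ p.1} with hBdef
    have hBconv : Convex ℝ B := by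
      have hconc : ConcaveOn ℝ Set.univ (fun x => f₂ a - f₂ x) :=
        (concaveOn_const _ convex_univ).sub h₂
      have := hconc.convex_hypograph
      simpa [hBdef, Set.setOf_and] using this
    have hdisj : Disjoint A B := by
      rw [Set.disjoint_left]
      rintro ⟨x, t⟩ hA hB
      simp only [hAdef, hBdef, Set.mem_setOf_eq, hg₁def] at hA hB
      have := hx' x
      linarith
    obtain ⟨g, u, hgA, hgB⟩ := geometric_hahn_banach_open hAconv hAopen hBconv hdisj
    set ℓ : X →L[ℝ] ℝ := g.comp (ContinuousLinearMap.inl ℝ X ℝ) with hℓdef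
    set c : ℝ := g (0, 1) with hcdef
    have hg_eq : ∀ x t, g (x, t) = ℓ x + c * t := by
      intro x t
      have : (x, t) = (x, (0:ℝ)) + t • ((0:X), (1:ℝ)) := by
        simp [Prod.ext_iff]
      rw [this, map_add, map_smul]
      simp [hℓdef, hcdef, mul_comm]
    -- (a, 0) ∈ B gives u ≤ ℓ a
    have huℓa : u ≤ ℓ a := by
      have := hgB (a, 0) (by simp [hBdef])
      simpa [hg_eq] using this
    -- points (a, t), t > 0 are in A
    have hAt : ∀ t : ℝ, 0 < t → ℓ a + c * t < u := by
      intro t ht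
      have := hgA (a, t) (by simp [hAdef, hg₁def, ht])
      simpa [hg_eq] using this
    have hcneg : c < 0 := by
      have := hAt 1 one_pos
      nlinarith
    have hc0 : c ≠ 0 := hcneg.ne
    have hcancel : ∀ d : ℝ, c * (d / -c) = -d := by
      intro d
      rw [div_neg, mul_neg, ← mul_div_assoc, mul_div_cancel_left₀ _ hc0]
    have hℓau : ℓ a ≤ u := by
      by_contra h
      push_neg at h
      have ht : 0 < (ℓ a - u) / (-c) := div_pos (by linarith) (by linarith)
      have h2 := hAt _ ht
      have h3 := hcancel (ℓ a - u)
      linarith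
    have huℓa' : u = ℓ a := le_antisymm huℓa hℓau
    -- closure of A inequality: ℓ x + c * g₁ x ≤ u
    have hAcl : ∀ x : X, ℓ x + c * g₁ x ≤ u := by
      intro x
      by_contra h
      push_neg at h
      have hε : 0 < (ℓ x + c * g₁ x - u) / (-c) := div_pos (by linarith) (by linarith)
      have hmem : (x, g₁ x + (ℓ x + c * g₁ x - u) / (-c)) ∈ A := by
        simp only [hAdef, Set.mem_setOf_eq]; linarith
      have h2 := hgA _ hmem
      rw [hg_eq, mul_add] at h2
      have h3 := hcancel (ℓ x + c * g₁ x - u)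
      linarith
    -- B inequality: u ≤ ℓ x + c * (f₂ a - f₂ x)
    have hBineq : ∀ x : X, u ≤ ℓ x + c * (f₂ a - f₂ x) := by
      intro x
      have := hgB (x, f₂ a - f₂ x) (by simp [hBdef])
      simpa [hg_eq] using this
    have hcinv : (1:ℝ)/c ≤ 0 := (div_neg_of_pos_of_neg one_pos hcneg).le
    have hdistrib : ∀ d e : ℝ, 1/c * (d + c * e) = 1/c * d + e := by
      intro d e
      rw [mul_add, one_div, inv_mul_cancel_left₀ hc0]
    -- define x₂' = (1/c) • ℓ and x₁' = x' - x₂'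
    refine Set.mem_add.2 ⟨x' - (1/c) • ℓ, ?_, (1/c) • ℓ, ?_, by abel⟩
    · intro x
      have h1 : ℓ x + c * g₁ x ≤ ℓ a := (hAcl x).trans huℓa
      have h2 := mul_le_mul_of_nonpos_left h1 hcinv
      have h3 := hdistrib (ℓ x) (g₁ x)
      rw [h3] at h2
      have h4 : g₁ x = f₁ x - f₁ a - (x' x - x' a) := by
        simp [hg₁def, map_sub]
      rw [h4] at h2
      simp only [ContinuousLinearMap.sub_apply, ContinuousLinearMap.smul_apply,
        map_sub, smul_eq_mul]
      linarith
    · intro x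
      have h1 : ℓ a ≤ ℓ x + c * (f₂ a - f₂ x) := hℓau.trans (hBineq x)
      have h2 := mul_le_mul_of_nonpos_left h1 hcinv
      have h3 := hdistrib (ℓ x) (f₂ a - f₂ x)
      rw [h3] at h2
      simp only [ContinuousLinearMap.smul_apply, map_sub, smul_eq_mul]
      linarith
  · rintro ⟨x₁', hx₁', x₂', hx₂', rfl⟩
    intro x
    have := add_le_add (hx₁' x) (hx₂' x)
    simpa [ContinuousLinearMap.add_apply] using this |>.trans_eq (by ring)
end
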